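/- Let H be a group. Call a group G H-null if every group homomorphism H → G is trivial. Suppose the full subcategory of H-null groups is reflective in the category of groups, with reflector P_H and unit maps η_G : G → P_H(G) (so each P_H(G) is H-null and every homomorphism from G to an H-null group factors uniquely through η_G). Then P_H is conditionally flat: if a group extension 1 → K → E → Q → 1 is P_H-flat (i.e., applying P_H to the kernel inclusion and to the projection yields a group extension 1 → P_H(K) → P_H(E) → P_H(Q) → 1), then for every group homomorphism f : X → Q, the pullback extension 1 → K' → P → X → 1, where P = {(e,x) ∈ E × X : p(e) = f(x)} with projection to X and kernel K' = {(k,1) : k ∈ K}, is also P_H-flat. -/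

import Mathlib

open CategoryTheory

universe u

/-- The pullback (fiber product) of two homomorphisms `p : E →* Q` and `f : X →* Q`,
as a subgroup of `E × X`. -/
def pullbackSubgroup {E X Q : Type*} [Group E] [Group X] [Group Q]
    (p : E →* Q) (f : X →* Q) : Subgroup (E × X) where
  carrier := {q : E × X | p q.1 = f q.2}
  one_mem' := by simp
  mul_mem' := by
    intro a b ha hb
    simp only [Set.mem_setOf_eq, Prod.fst_mul, Prod.snd_mul, map_mul] at *
    rw [ha, hb]
  inv_mem' := by
    intro a ha
    simp only [Set.mem_setOf_eq, Prod.fst_inv, Prod.snd_inv, map_inv] at *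
    rw [ha]

/-- The projection from the pullback of `p : E →* Q` along `f : X →* Q` to `X`. -/
def pullbackProj {E X Q : Type*} [Group E] [Group X] [Group Q]
    (p : E →* Q) (f : X →* Q) : ↥(pullbackSubgroup p f) →* X :=
  (MonoidHom.snd E X).comp (pullbackSubgroup p f).subtype

/-- The inclusion of the kernel of a morphism of groups, as a morphism in `Grp`. -/
def kerIncl {E Q : GrpCat.{u}} (p : E ⟶ Q) : GrpCat.of ↥(MonoidHom.ker p.hom) ⟶ E :=
  GrpCat.ofHom (MonoidHom.ker p.hom).subtype

/-- The projection of the pullback of `p : E ⟶ Q` along `f : X ⟶ Q`, as a morphism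
in `Grp`. -/
def pbHom {E X Q : GrpCat.{u}} (p : E ⟶ Q) (f : X ⟶ Q) :
    GrpCat.of ↥(pullbackSubgroup p.hom f.hom) ⟶ X :=
  GrpCat.ofHom (pullbackProj p.hom f.hom)

/-- A group `G` is `H`-null if every homomorphism `H →* G` is trivial. -/
def IsHNull (H : Type u) [Group H] (G : GrpCat.{u}) : Prop :=
  ∀ φ : H →* G, φ = 1

/-- An extension `1 → ker p → E → Q → 1` is `L`-flat for a functor `L : Grp ⥤ Grp` if
applying `L` to the kernel inclusion and to `p` yields again a group extension. -/
def GrpFlat (L : GrpCat.{u} ⥤ GrpCat.{u}) {E Q : GrpCat.{u}} (p : E ⟶ Q) : Prop :=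
  Function.Injective (L.map (kerIncl p)).hom ∧
  Function.Surjective (L.map p).hom ∧
  MonoidHom.range (L.map (kerIncl p)).hom = MonoidHom.ker (L.map p).hom

/-! The unit `η_G` is surjective, and its kernel `N` is `H`-acyclic: the kernel `N₂` of `η_N` is
characteristic in `N`, hence normal in `G`, and `G ⧸ N₂` is an extension of `N ⧸ N₂ ⊆ P_H N` by
`G ⧸ N ⊆ P_H G`, hence `H`-null, which forces `N ≤ N₂`.

Flatness of `p : E → Q` says that `ker η_E` maps onto `ker η_Q` and meets `K` in `ker η_K`. In the
pullback `P`, an element killed by both `η_E` and `η_X` is killed by `η_P`: on the subgroup of such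
elements `η_P` kills the kernel of the projection onto `ker η_X`, so it factors through that
acyclic group. Lifting `ker η_X` to such elements gives exactness in the middle, and `K' ≅ K`
gives injectivity. -/

section HNull

variable {H : Type u} [Group H]

theorem IsHNull.of_injective {A B : Type u} [Group A] [Group B] (hB : IsHNull H (GrpCat.of B))
    (ω : A →* B) (hω : Function.Injective ω) : IsHNull H (GrpCat.of A) := fun ψ =>
  MonoidHom.ext fun h => hω <| by simpa using DFunLike.congr_fun (hB (ω.comp ψ)) h

theorem IsHNull.of_ker {B C : Type u} [Group B] [Group C] (π : B →* C)
    (hker : IsHNull H (GrpCat.of π.ker)) (hC : IsHNull H (GrpCat.of C)) :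
    IsHNull H (GrpCat.of B) := by
  intro ψ
  have hψ : ∀ h, ψ h ∈ π.ker := fun h => by
    simpa using DFunLike.congr_fun (hC (π.comp ψ)) h
  ext h
  simpa using congr_arg Subtype.val (DFunLike.congr_fun (hker (ψ.codRestrict _ hψ)) h)

theorem IsHNull.range_of_ker_eq {A B D : Type u} [Group A] [Group B] [Group D]
    (hD : IsHNull H (GrpCat.of D)) {θ : A →* B} {g : A →* D} (h : θ.ker = g.ker) :
    IsHNull H (GrpCat.of θ.range) :=
  hD.of_injective ((QuotientGroup.kerLift g).comp <|
      (QuotientGroup.quotientMulEquivOfEq h).toMonoidHom.comp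
        (QuotientGroup.quotientKerEquivRange θ).symm.toMonoidHom) <|
    (QuotientGroup.kerLift_injective g).comp <|
      (QuotientGroup.quotientMulEquivOfEq h).injective.comp
        (QuotientGroup.quotientKerEquivRange θ).symm.injective

end HNull

structure IsNullification (H : Type u) [Group H] (PH : GrpCat.{u} ⥤ GrpCat.{u})
    (η : 𝟭 GrpCat.{u} ⟶ PH) : Prop where
  isHNull_obj : ∀ G : GrpCat.{u}, IsHNull H (PH.obj G)
  existsUnique_lift : ∀ (G D : GrpCat.{u}), IsHNull H D → ∀ g : G ⟶ D,
    ∃! h : PH.obj G ⟶ D, η.app G ≫ h = g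

theorem unit_naturality_apply {PH : GrpCat.{u} ⥤ GrpCat.{u}} (η : 𝟭 GrpCat.{u} ⟶ PH)
    {G G' : GrpCat.{u}} (φ : G ⟶ G') (x : G) : η.app G' (φ x) = PH.map φ (η.app G x) :=
  NatTrans.naturality_apply η φ x

namespace IsNullification

variable {H : Type u} [Group H] {PH : GrpCat.{u} ⥤ GrpCat.{u}} {η : 𝟭 GrpCat.{u} ⟶ PH}
  (hP : IsNullification H PH η)
include hP

theorem map_eq_one_of_unit_eq_one {G : GrpCat.{u}} {D : Type u} [Group D]
    (hD : IsHNull H (GrpCat.of D)) (φ : G →* D) {x : G} (hx : η.app G x = 1) : φ x = 1 := by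
  obtain ⟨h, hh, -⟩ := hP.existsUnique_lift G (GrpCat.of D) hD (GrpCat.ofHom φ)
  calc φ x = h (η.app G x) := (ConcreteCategory.congr_hom hh x).symm
    _ = 1 := by rw [hx]; exact map_one h.hom

theorem unit_surjective (G : GrpCat.{u}) : Function.Surjective (η.app G) := by
  set R := (η.app G).hom.range
  obtain ⟨r, hr, -⟩ := hP.existsUnique_lift G (GrpCat.of R)
    ((hP.isHNull_obj G).of_injective R.subtype Subtype.val_injective)
    (GrpCat.ofHom (η.app G).hom.rangeRestrict)
  have hretract : r ≫ GrpCat.ofHom R.subtype = 𝟙 (PH.obj G) :=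
    (hP.existsUnique_lift G (PH.obj G) (hP.isHNull_obj G) (η.app G)).unique
      (by rw [← Category.assoc, hr]; rfl) (Category.comp_id _)
  intro z
  obtain ⟨g, hg⟩ := (r z).2
  exact ⟨g, hg.trans (ConcreteCategory.congr_hom hretract z)⟩

theorem map_surjective {A B : GrpCat.{u}} {φ : A ⟶ B} (hφ : Function.Surjective φ) :
    Function.Surjective (PH.map φ).hom := by
  intro z
  obtain ⟨b, rfl⟩ := hP.unit_surjective B z
  obtain ⟨a, rfl⟩ := hφ b
  exact ⟨η.app A a, (unit_naturality_apply η φ a).symm⟩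

theorem injective_map_iff {A B : GrpCat.{u}} (φ : A ⟶ B) :
    Function.Injective (PH.map φ).hom ↔ ∀ a, η.app B (φ a) = 1 → η.app A a = 1 := by
  rw [injective_iff_map_eq_one]
  refine ⟨fun h a ha => h _ ?_, fun h z hz => ?_⟩
  · rwa [← unit_naturality_apply]
  · obtain ⟨a, rfl⟩ := hP.unit_surjective A z
    exact h a (by rwa [unit_naturality_apply])

theorem ker_map_le_range_map_iff {A B C : GrpCat.{u}} (i : A ⟶ B) (π : B ⟶ C) :
    (PH.map π).hom.ker ≤ (PH.map i).hom.range ↔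
      ∀ b, η.app C (π b) = 1 → ∃ a, η.app B (i a) = η.app B b := by
  refine ⟨fun h b hb => ?_, fun h z hz => ?_⟩
  · obtain ⟨z, hz⟩ := h (show η.app B b ∈ (PH.map π).hom.ker by
      rwa [MonoidHom.mem_ker, ← unit_naturality_apply])
    obtain ⟨a, rfl⟩ := hP.unit_surjective A z
    exact ⟨a, (unit_naturality_apply η i a).trans hz⟩
  · obtain ⟨b, rfl⟩ := hP.unit_surjective B z
    obtain ⟨a, ha⟩ := h b (by rwa [unit_naturality_apply])
    exact ⟨η.app A a, (unit_naturality_apply η i a).symm.trans ha⟩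

theorem range_map_le_ker_map {A B C : GrpCat.{u}} {i : A ⟶ B} {π : B ⟶ C}
    (h : ∀ a, π (i a) = 1) : (PH.map i).hom.range ≤ (PH.map π).hom.ker := by
  rintro _ ⟨z, rfl⟩
  obtain ⟨a, rfl⟩ := hP.unit_surjective A z
  rw [MonoidHom.mem_ker, ← unit_naturality_apply, ← unit_naturality_apply, h]
  exact map_one (η.app C).hom

theorem unit_ker_unit_eq_one (G : GrpCat.{u}) (n : (η.app G).hom.ker) :
    η.app (GrpCat.of (η.app G).hom.ker) n = 1 := by
  revert n
  set N := (η.app G).hom.ker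
  set N₂ := (η.app (GrpCat.of N)).hom.ker
  have : N₂.Characteristic := Subgroup.characteristic_iff_le_comap.2 fun σ _ hm =>
    hP.map_eq_one_of_unit_eq_one (hP.isHNull_obj _)
      ((η.app (GrpCat.of N)).hom.comp σ.toMonoidHom) hm
  set θ : N →* G ⧸ N₂.map N.subtype := (QuotientGroup.mk' _).comp N.subtype
  have hθ : θ.ker = N₂ := by
    ext m
    simp [θ]
  set π : G ⧸ N₂.map N.subtype →* PH.obj G :=
    QuotientGroup.lift _ (η.app G).hom (Subgroup.map_subtype_le N₂)
  have hexact : π.ker ≤ θ.range := by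
    rintro x hx
    obtain ⟨g, rfl⟩ := QuotientGroup.mk_surjective x
    exact ⟨⟨g, hx⟩, rfl⟩
  have hquot : IsHNull H (GrpCat.of (G ⧸ N₂.map N.subtype)) :=
    IsHNull.of_ker π (((hP.isHNull_obj _).range_of_ker_eq hθ).of_injective
      (Subgroup.inclusion hexact) (Subgroup.inclusion_injective hexact)) (hP.isHNull_obj G)
  intro n
  have hn : N.subtype n ∈ N₂.map N.subtype := by
    simpa using hP.map_eq_one_of_unit_eq_one hquot (QuotientGroup.mk' _) n.2
  exact (Subgroup.mem_map_iff_mem N.subtype_injective).1 hn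

end IsNullification

section Pullback

variable {E Q X : GrpCat.{u}} (p : E ⟶ Q) (f : X ⟶ Q)

def pullbackFst : GrpCat.of (pullbackSubgroup p.hom f.hom) ⟶ E :=
  GrpCat.ofHom ((MonoidHom.fst E X).comp (pullbackSubgroup p.hom f.hom).subtype)

def kerToKerPbHom :
    GrpCat.of (MonoidHom.ker p.hom) ⟶ GrpCat.of (MonoidHom.ker (pbHom p f).hom) :=
  GrpCat.ofHom
    { toFun := fun k => ⟨⟨(k, 1), k.2.trans (map_one f.hom).symm⟩, rfl⟩
      map_one' := rfl
      map_mul' := fun k l => by ext <;> simp }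

theorem exists_kerToKerPbHom_eq (u : MonoidHom.ker (pbHom p f).hom) :
    ∃ k : MonoidHom.ker p.hom, (k : E) = u.1.1.1 ∧ kerToKerPbHom p f k = u := by
  have hu : u.1.1.2 = 1 := u.2
  have hk : p u.1.1.1 = 1 := u.1.2.trans (by rw [hu]; exact map_one f.hom)
  exact ⟨⟨u.1.1.1, hk⟩, rfl, by ext <;> simp [kerToKerPbHom, hu]⟩

theorem pbHom_surjective (hp : Function.Surjective p.hom) : Function.Surjective (pbHom p f) := by
  intro x
  obtain ⟨e, he⟩ := hp (f x)
  exact ⟨⟨(e, x), he⟩, rfl⟩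

variable {H : Type u} [Group H] {PH : GrpCat.{u} ⥤ GrpCat.{u}} {η : 𝟭 GrpCat.{u} ⟶ PH}

theorem IsNullification.exists_unit_eq_one_of_flat (hP : IsNullification H PH η)
    (hp : Function.Surjective p.hom) (hflat : GrpFlat PH p) (q : Q) (hq : η.app Q q = 1) :
    ∃ e, η.app E e = 1 ∧ p e = q := by
  obtain ⟨e, rfl⟩ := hp q
  obtain ⟨k, hk⟩ := (hP.ker_map_le_range_map_iff (kerIncl p) p).1 hflat.2.2.ge e hq
  refine ⟨(kerIncl p k)⁻¹ * e, ?_, ?_⟩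
  · rw [map_mul, map_inv, hk, inv_mul_cancel]
  · rw [map_mul, map_inv, show p (kerIncl p k) = 1 from k.2, inv_one, one_mul]

theorem IsNullification.unit_kerPbHom_eq_one (hP : IsNullification H PH η)
    (hinj : Function.Injective (PH.map (kerIncl p)).hom) (u : MonoidHom.ker (pbHom p f).hom)
    (hu : η.app E u.1.1.1 = 1) : η.app (GrpCat.of (MonoidHom.ker (pbHom p f).hom)) u = 1 := by
  obtain ⟨k, hk, rfl⟩ := exists_kerToKerPbHom_eq p f u
  rw [← hk] at hu
  rw [unit_naturality_apply, (hP.injective_map_iff _).1 hinj k hu, map_one]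

theorem IsNullification.unit_pullback_eq_one (hP : IsNullification H PH η)
    (hp : Function.Surjective p.hom) (hflat : GrpFlat PH p) (w : pullbackSubgroup p.hom f.hom)
    (hE : η.app E w.1.1 = 1) (hX : η.app X w.1.2 = 1) :
    η.app (GrpCat.of (pullbackSubgroup p.hom f.hom)) w = 1 := by
  revert w
  set P := pullbackSubgroup p.hom f.hom
  let M : Subgroup P := ((η.app E).hom.ker.prod (η.app X).hom.ker).comap P.subtype
  let ρ : M →* (η.app X).hom.ker :=
    ((MonoidHom.snd E X).comp (P.subtype.comp M.subtype)).codRestrict _ fun u => u.2.2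
  have hρ : Function.Surjective ρ := by
    rintro ⟨x, hx⟩
    obtain ⟨e, he, hpe⟩ := hP.exists_unit_eq_one_of_flat p hp hflat (f x)
      (by rw [unit_naturality_apply, show η.app X x = 1 from hx, map_one])
    exact ⟨⟨⟨(e, x), hpe⟩, he, hx⟩, rfl⟩
  have hker : ρ.ker ≤ ((η.app (GrpCat.of P)).hom.comp M.subtype).ker := by
    intro u hu
    have hK := hP.unit_kerPbHom_eq_one p f hflat.1 ⟨u.1, congrArg Subtype.val hu⟩ u.2.1
    show η.app (GrpCat.of P) u.1 = 1
    rw [show u.1 = kerIncl (pbHom p f) ⟨u.1, congrArg Subtype.val hu⟩ from rfl,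
      unit_naturality_apply, hK, map_one]
  intro w hE hX
  calc η.app (GrpCat.of P) w = ρ.liftOfSurjective hρ ⟨_, hker⟩ (ρ ⟨w, hE, hX⟩) :=
        (ρ.liftOfRightInverse_comp_apply _ _ ⟨_, hker⟩ ⟨w, hE, hX⟩).symm
    _ = 1 := hP.map_eq_one_of_unit_eq_one (hP.isHNull_obj _) (ρ.liftOfSurjective hρ ⟨_, hker⟩)
      (hP.unit_ker_unit_eq_one X _)

theorem IsNullification.exists_kerPbHom_unit_eq (hP : IsNullification H PH η)
    (hp : Function.Surjective p.hom) (hflat : GrpFlat PH p) (w : pullbackSubgroup p.hom f.hom)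
    (hX : η.app X w.1.2 = 1) :
    ∃ u, η.app (GrpCat.of (pullbackSubgroup p.hom f.hom)) (kerIncl (pbHom p f) u) =
      η.app (GrpCat.of (pullbackSubgroup p.hom f.hom)) w := by
  obtain ⟨e, he, hpe⟩ := hP.exists_unit_eq_one_of_flat p hp hflat (f w.1.2)
    (by rw [unit_naturality_apply, hX, map_one])
  let v : pullbackSubgroup p.hom f.hom := ⟨(e, w.1.2), hpe⟩
  refine ⟨⟨w * v⁻¹, mul_inv_cancel w.1.2⟩, ?_⟩
  change η.app (GrpCat.of (pullbackSubgroup p.hom f.hom)) (w * v⁻¹) = _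
  rw [map_mul, map_inv, hP.unit_pullback_eq_one p f hp hflat v he hX, inv_one, mul_one]

end Pullback

/-- Nullification functors in the category of groups are conditionally flat: if `P_H` is
a reflector onto the full subcategory of `H`-null groups, with unit `η`, then any pullback
of a `P_H`-flat group extension is again `P_H`-flat. -/
theorem nullification_conditionally_flat (H : Type u) [Group H]
    (PH : GrpCat.{u} ⥤ GrpCat.{u}) (η : 𝟭 GrpCat.{u} ⟶ PH)
    (hnull : ∀ G : GrpCat.{u}, IsHNull H (PH.obj G))
    (huniv : ∀ (G D : GrpCat.{u}), IsHNull H D → ∀ g : G ⟶ D,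
      ∃! h : PH.obj G ⟶ D, η.app G ≫ h = g)
    {E Q : GrpCat.{u}} (p : E ⟶ Q) (hp : Function.Surjective p.hom) (hflat : GrpFlat PH p)
    {X : GrpCat.{u}} (f : X ⟶ Q) :
    GrpFlat PH (pbHom p f) := by
  have hP : IsNullification H PH η := ⟨hnull, huniv⟩
  refine ⟨?_, hP.map_surjective (pbHom_surjective p f hp),
    le_antisymm (hP.range_map_le_ker_map fun u => u.2) ?_⟩
  · refine (hP.injective_map_iff _).2 fun u hu => hP.unit_kerPbHom_eq_one p f hflat.1 u ?_
    rw [show u.1.1.1 = pullbackFst p f (kerIncl (pbHom p f) u) from rfl, unit_naturality_apply,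
      hu, map_one]
  · exact (hP.ker_map_le_range_map_iff _ _).2 fun w hw =>
      hP.exists_kerPbHom_unit_eq p f hp hflat w hw
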